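/- If two token configurations on a path are each ⟦−3,3⟧-stable and we define y(v) as the sum of the token counts of both configurations at node v, then for any two nodes u, w with |y(u) − y(w)| ≥ 3, the distance between u and w is at least 4; in particular, adjacent nodes differ by at most 2, and any pair with difference exactly 2 admits a local correction, so a ⟦−1,1⟧-stable (fully balanced, |y(u)−y(v)| ≤ 1 on edges) configuration can be obtained by changing loads only within constant distance. -/

import Mathlib

/-!
A token at height `i ≥ 2` on `v` has a token at height `i - 1` on every node within distance `3`,
so each `⟦−3,3⟧`-stable load drops by at most one within distance `3`, and the sum `y` of two of them
varies by at most `2` there. To balance `y`, push one unit across every edge where `y` jumps by `2`,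
towards the lower end, except that a node already sending a unit to its left neighbour sends
nothing to its right. Only the four loads around an edge decide the new loads at its ends, and
these loads span at most `2`.
-/

/-- A token configuration on the path (given by per-node token counts `z`) is
`k`-stable if every token at slot `(v,i)` with `i > 1` has a token at
`(v+k, i−1)`. -/
def kStable (z : ℤ → ℕ) (k : ℤ) : Prop :=
  ∀ (v : ℤ) (i : ℕ), 2 ≤ i → i ≤ z v → i - 1 ≤ z (v + k)

lemma kStable.le_add_one {z : ℤ → ℕ} {k : ℤ} (h : kStable z k) (v : ℤ) : z v ≤ z (v + k) + 1 := by
  by_cases hv : 2 ≤ z v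
  · have := h v (z v) hv le_rfl
    omega
  · omega

lemma abs_sub_le_one_of_kStable {z : ℤ → ℕ} {r : ℤ} (h : ∀ k ∈ Finset.Icc (-r) r, kStable z k)
    {u w : ℤ} (huw : |u - w| ≤ r) : |(z u : ℤ) - z w| ≤ 1 := by
  have hle : ∀ {u w : ℤ}, |u - w| ≤ r → z u ≤ z w + 1 := fun {u w} huw => by
    have hk : w - u ∈ Finset.Icc (-r) r := Finset.mem_Icc.2 (abs_le.1 (abs_sub_comm u w ▸ huw))
    simpa using (h _ hk).le_add_one u
  have := hle huw
  have := hle (abs_sub_comm u w ▸ huw)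
  rw [abs_le]
  omega

lemma abs_add_sub_add_le_two_of_kStable {z₁ z₂ : ℤ → ℕ} {r : ℤ}
    (h₁ : ∀ k ∈ Finset.Icc (-r) r, kStable z₁ k) (h₂ : ∀ k ∈ Finset.Icc (-r) r, kStable z₂ k)
    {u w : ℤ} (huw : |u - w| ≤ r) :
    |((z₁ u + z₂ u : ℕ) : ℤ) - ((z₁ w + z₂ w : ℕ) : ℤ)| ≤ 2 :=
  calc |((z₁ u + z₂ u : ℕ) : ℤ) - ((z₁ w + z₂ w : ℕ) : ℤ)|
      = |((z₁ u : ℤ) - z₁ w) + ((z₂ u : ℤ) - z₂ w)| := by push_cast; ring_nf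
    _ ≤ |(z₁ u : ℤ) - z₁ w| + |(z₂ u : ℤ) - z₂ w| := abs_add_le _ _
    _ ≤ 2 := by
      linarith [abs_sub_le_one_of_kStable h₁ huw, abs_sub_le_one_of_kStable h₂ huw]

/-- The number of units sent across an edge whose ends carry loads `b` and `c`, from the `b` end
to the `c` end, where `a` is the load on the other neighbour of `b`. The exception for `2 ≤ b - a`
is needed: on alternating loads `0, 2, 0, 2, …` sending from every peak both ways would
reproduce the alternation. -/
def balancingFlow (a b c : ℤ) : ℤ :=
  if 2 ≤ c - b then -1 else if 2 ≤ b - c ∧ b - a < 2 then 1 else 0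

lemma abs_balancingFlow_le (a b c : ℤ) : |balancingFlow a b c| ≤ 1 := by
  unfold balancingFlow
  split_ifs <;> norm_num

lemma balancingFlow_transfer_nonneg {a b c d : ℤ} (hb : 0 ≤ b) (hc : 0 ≤ c) (hd : 0 ≤ d) :
    0 ≤ c + balancingFlow a b c - balancingFlow b c d := by
  unfold balancingFlow
  split_ifs <;> omega

lemma abs_balancingFlow_transfer_sub_le_one {a b c d e : ℤ} (hbd : |b - d| ≤ 2)
    (hbe : |b - e| ≤ 2) (hcd : |c - d| ≤ 2) (hce : |c - e| ≤ 2) :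
    |(c + balancingFlow a b c - balancingFlow b c d) -
      (d + balancingFlow b c d - balancingFlow c d e)| ≤ 1 := by
  simp only [abs_le, balancingFlow] at *
  split_ifs <;> omega

theorem exists_balancing_flow (Y : ℤ → ℤ) (hY₀ : ∀ v, 0 ≤ Y v)
    (hY : ∀ u w, |u - w| ≤ 3 → |Y u - Y w| ≤ 2) :
    ∃ (y' : ℤ → ℕ) (f : ℤ → ℤ),
      (∀ v : ℤ, (y' v : ℤ) = Y v + f (v - 1) - f v) ∧
      (∀ v : ℤ, |f v| ≤ 1) ∧
      (∀ v : ℤ, |(y' v : ℤ) - (y' (v + 1) : ℤ)| ≤ 1) := by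
  set f : ℤ → ℤ := fun v => balancingFlow (Y (v - 1)) (Y v) (Y (v + 1)) with hf
  have hnonneg : ∀ v, 0 ≤ Y v + f (v - 1) - f v := fun v => by
    simpa [hf] using balancingFlow_transfer_nonneg (a := Y (v - 1 - 1)) (hY₀ (v - 1)) (hY₀ v)
      (hY₀ (v + 1))
  have hy' : ∀ v, ((Y v + f (v - 1) - f v).toNat : ℤ) = Y v + f (v - 1) - f v := fun v =>
    Int.toNat_of_nonneg (hnonneg v)
  refine ⟨fun v => (Y v + f (v - 1) - f v).toNat, f, hy', fun v => abs_balancingFlow_le _ _ _,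
    fun v => ?_⟩
  dsimp only
  rw [hy', hy']
  simp only [hf, add_sub_cancel_right, sub_add_cancel]
  have near : ∀ u w, -3 ≤ u - w → u - w ≤ 3 → |Y u - Y w| ≤ 2 := fun u w h₁ h₂ =>
    hY u w (abs_le.2 ⟨h₁, h₂⟩)
  exact abs_balancingFlow_transfer_sub_le_one (near _ _ (by omega) (by omega))
    (near _ _ (by omega) (by omega)) (near _ _ (by omega) (by omega))
    (near _ _ (by omega) (by omega))

/-- Summing two `⟦−3,3⟧`-stable configurations: a load difference of at least
`3` forces distance at least `4`; in particular adjacent loads differ by at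
most `2`, and a fully balanced configuration (adjacent loads differing by at
most `1`) is obtained by moving at most one unit across each edge. -/
theorem stmt15 (z₁ z₂ : ℤ → ℕ)
    (h₁ : ∀ k ∈ Finset.Icc (-3 : ℤ) 3, kStable z₁ k)
    (h₂ : ∀ k ∈ Finset.Icc (-3 : ℤ) 3, kStable z₂ k) :
    (∀ u w : ℤ, 3 ≤ |((z₁ u + z₂ u : ℕ) : ℤ) - ((z₁ w + z₂ w : ℕ) : ℤ)| → 4 ≤ |u - w|) ∧
    (∀ v : ℤ, |((z₁ v + z₂ v : ℕ) : ℤ) - ((z₁ (v + 1) + z₂ (v + 1) : ℕ) : ℤ)| ≤ 2) ∧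
    (∃ (y' : ℤ → ℕ) (f : ℤ → ℤ),
      (∀ v : ℤ, (y' v : ℤ) = ((z₁ v + z₂ v : ℕ) : ℤ) + f (v - 1) - f v) ∧
      (∀ v : ℤ, |f v| ≤ 1) ∧
      (∀ v : ℤ, |(y' v : ℤ) - (y' (v + 1) : ℤ)| ≤ 1)) := by
  have near : ∀ u w : ℤ, |u - w| ≤ 3 →
      |((z₁ u + z₂ u : ℕ) : ℤ) - ((z₁ w + z₂ w : ℕ) : ℤ)| ≤ 2 := fun _ _ =>
    abs_add_sub_add_le_two_of_kStable h₁ h₂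
  refine ⟨fun u w hyuw => ?_, fun v => near v (v + 1) (by norm_num), ?_⟩
  · by_contra! huw
    exact absurd (near u w (Int.lt_add_one_iff.1 huw)) (by omega)
  · exact exists_balancing_flow _ (fun _ => Int.natCast_nonneg _) near
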